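/- arXiv:2106.11548 — 2 statements merged into one kernel-verified Lean document; each statement's English description precedes it below -/
import Mathlib

section
/- For 0 < μ < L, g(α) = 1 - (μ + L)α + L²α², and any α ∈ [1/L, min{1/μ, α_max}] with α_max ∈ (0, 1/L + μ/L²), we have g(α) ≤ max{g(α_max), 1 - μ/L} < 1. -/
theorem g_bound_on_interval (μ L αmax α : ℝ) (hμ : 0 < μ) (hμL : μ < L)
    (hαmax : αmax ∈ Set.Ioo 0 (1 / L + μ / L ^ 2))
    (g : ℝ → ℝ) (hg : ∀ a, g a = 1 - (μ + L) * a + L ^ 2 * a ^ 2)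
    (hα₁ : 1 / L ≤ α) (hα₂ : α ≤ min (1 / μ) αmax) :
    g α ≤ max (g αmax) (1 - μ / L) ∧ max (g αmax) (1 - μ / L) < 1 := by
  have hL : 0 < L := hμ.trans hμL
  have hab : α ≤ αmax := hα₂.trans (min_le_right _ _)
  obtain ⟨h0, h1⟩ := hαmax
  -- clear denominators
  have hLα : 1 ≤ L * α := by have := (div_le_iff₀ hL).mp hα₁; linarith [this]
  have hmaxL : L ^ 2 * αmax < L + μ := by
    have := mul_lt_mul_of_pos_left h1 (by positivity : (0:ℝ) < L ^ 2)
    calc L ^ 2 * αmax < L ^ 2 * (1 / L + μ / L ^ 2) := this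
      _ = L + μ := by field_simp
  have hmuL : μ / L < 1 := (div_lt_one hL).mpr hμL
  constructor
  · rcases eq_or_lt_of_le hα₁ with heq | hlt
    · rw [← heq, hg]
      have : 1 - (μ + L) * (1 / L) + L ^ 2 * (1 / L) ^ 2 = 1 - μ / L := by
        field_simp; ring
      rw [this]
      exact le_max_right _ _
    · rcases le_or_gt (g α) (1 - μ / L) with h | h
      · exact h.trans (le_max_right _ _)
      · refine le_max_of_le_left ?_
        rw [hg] at h ⊢
        rw [hg]
        have hA : 0 < L * α - 1 := by
          have := (div_lt_iff₀ hL).mp hlt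
          linarith
        -- from h : 1 - μ/L < 1 - (μ+L)α + L²α², multiply by L:
        have hL' : L - μ < L * (1 - (μ + L) * α + L ^ 2 * α ^ 2) := by
          have := mul_lt_mul_of_pos_left h hL
          calc L - μ = L * (1 - μ / L) := by field_simp
            _ < _ := this
        -- derive bracket: L²α > μ
        have hbr : μ < L ^ 2 * α := by
          nlinarith [hA, hL', sq_nonneg (L * α - 1)]
        nlinarith [mul_nonneg (sub_nonneg.2 hab)
          (by nlinarith : (0:ℝ) ≤ L ^ 2 * αmax + L ^ 2 * α - (μ + L))]
  · have hgmax : g αmax < 1 := by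
      rw [hg]
      nlinarith [mul_lt_mul_of_pos_left hmaxL h0]
    have h2 : 0 < μ / L := by positivity
    exact max_lt hgmax (by linarith)
end

section
/- Let f : ℝⁿ → ℝ be μ-strongly convex and L-smooth with minimizer θ* satisfying ∇f(θ*) = 0, and let 0 < μ < L. Consider gradient descent θ_{k+1} = θ_k - α_k ∇f(θ_k) where each α_k ∈ [1/L, min{1/μ, α_max}] with α_max ∈ (0, 1/L + μ/L²). Then ‖θ_k - θ*‖² ≤ M^k ‖θ_0 - θ*‖², where M = max{1 - (μ+L)α_max + L²α_max², 1 - μ/L} ∈ (0, 1). -/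
set_option maxHeartbeats 1000000

open InnerProductSpace Set

variable {n : ℕ}

lemma line_deriv (f : EuclideanSpace ℝ (Fin n) → ℝ) (hf : Differentiable ℝ f)
    (x v : EuclideanSpace ℝ (Fin n)) (t : ℝ) :
    HasDerivAt (fun s : ℝ => f (x + s • v)) (inner ℝ (gradient f (x + t • v)) v : ℝ) t := by
  have hc : HasDerivAt (fun s : ℝ => x + s • v) v t := by
    simpa using ((hasDerivAt_id t).smul_const v).const_add x
  have h := ((hf (x + t • v)).hasGradientAt).hasFDerivAt.comp_hasDerivAt t hc
  simp only [InnerProductSpace.toDual_apply_apply] at h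
  exact h

lemma descent (f : EuclideanSpace ℝ (Fin n) → ℝ) (L : ℝ) (hL0 : 0 < L)
    (hf : Differentiable ℝ f)
    (hL : ∀ x y, ‖gradient f x - gradient f y‖ ≤ L * ‖x - y‖)
    (x y : EuclideanSpace ℝ (Fin n)) :
    f y ≤ f x + (inner ℝ (gradient f x) (y - x) : ℝ) + L / 2 * ‖y - x‖ ^ 2 := by
  set v := y - x with hv
  set φ : ℝ → ℝ := fun t =>
    f (x + t • v) - t * (inner ℝ (gradient f x) v : ℝ) - L / 2 * t ^ 2 * ‖v‖ ^ 2 with hφ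
  have hder : ∀ t : ℝ, HasDerivAt φ
      ((inner ℝ (gradient f (x + t • v)) v : ℝ) - (inner ℝ (gradient f x) v : ℝ)
        - L * t * ‖v‖ ^ 2) t := by
    intro t
    have h1 := line_deriv f hf x v t
    have h2 : HasDerivAt (fun s : ℝ => s * (inner ℝ (gradient f x) v : ℝ))
        (inner ℝ (gradient f x) v : ℝ) t := by
      simpa using (hasDerivAt_id t).mul_const (inner ℝ (gradient f x) v : ℝ)
    have h3 : HasDerivAt (fun s : ℝ => L / 2 * s ^ 2 * ‖v‖ ^ 2)
        (L * t * ‖v‖ ^ 2) t := by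
      have : HasDerivAt (fun s : ℝ => s ^ 2) (2 * t) t := by
        simpa using hasDerivAt_pow 2 t
      have := (this.const_mul (L / 2)).mul_const (‖v‖ ^ 2)
      exact this.congr_deriv (by ring)
    exact (h1.sub h2).sub h3
  have hd0 : ∀ t ∈ interior (Icc (0:ℝ) 1), deriv φ t ≤ 0 := by
    intro t ht
    rw [interior_Icc] at ht
    rw [(hder t).deriv]
    have hip : (inner ℝ (gradient f (x + t • v)) v : ℝ) - (inner ℝ (gradient f x) v : ℝ)
        = (inner ℝ (gradient f (x + t • v) - gradient f x) v : ℝ) := by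
      rw [inner_sub_left]
    rw [hip]
    have hcs : (inner ℝ (gradient f (x + t • v) - gradient f x) v : ℝ)
        ≤ ‖gradient f (x + t • v) - gradient f x‖ * ‖v‖ := real_inner_le_norm _ _
    have hlip : ‖gradient f (x + t • v) - gradient f x‖ ≤ L * (t * ‖v‖) := by
      have := hL (x + t • v) x
      simpa [norm_smul, abs_of_pos ht.1] using this
    nlinarith [norm_nonneg v, mul_le_mul_of_nonneg_right hlip (norm_nonneg v), hcs]
  have hcont : ContinuousOn φ (Icc 0 1) := fun t _ => ((hder t).continuousAt).continuousWithinAt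
  have hanti : AntitoneOn φ (Icc (0:ℝ) 1) := by
    apply antitoneOn_of_deriv_nonpos (convex_Icc 0 1) hcont
    · intro t ht
      rw [interior_Icc] at ht
      exact ((hder t).differentiableAt).differentiableWithinAt
    · exact hd0
  have h01 := hanti (left_mem_Icc.2 zero_le_one) (right_mem_Icc.2 zero_le_one) zero_le_one
  have h1 : φ 1 = f y - (inner ℝ (gradient f x) v : ℝ) - L / 2 * ‖v‖ ^ 2 := by
    simp only [hφ]
    rw [show x + (1:ℝ) • v = y from by rw [one_smul, hv]; abel]
    ring
  have h0 : φ 0 = f x := by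
    simp only [hφ]
    rw [show x + (0:ℝ) • v = x from by simp]
    ring
  rw [h1, h0] at h01
  linarith

lemma coco (f : EuclideanSpace ℝ (Fin n) → ℝ) (L μ : ℝ) (hL0 : 0 < L) (hμ0 : 0 < μ)
    (hf : Differentiable ℝ f)
    (hL : ∀ x y, ‖gradient f x - gradient f y‖ ≤ L * ‖x - y‖)
    (hsc : ∀ x y, f y ≥ f x + (inner ℝ (gradient f x) (y - x) : ℝ) + (μ / 2) * ‖y - x‖ ^ 2)
    (x y : EuclideanSpace ℝ (Fin n)) :
    f y ≥ f x + (inner ℝ (gradient f x) (y - x) : ℝ)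
      + 1 / (2 * L) * ‖gradient f y - gradient f x‖ ^ 2 := by
  set w := gradient f y - gradient f x with hw
  set z := y - (1 / L) • w with hz
  have hd := descent f L hL0 hf hL y z
  have hc := hsc x z
  have hzy : z - y = -((1 / L) • w) := by rw [hz]; abel
  have hnorm : ‖z - y‖ ^ 2 = (1 / L) ^ 2 * ‖w‖ ^ 2 := by
    rw [hzy, norm_neg, norm_smul]
    rw [Real.norm_eq_abs, abs_of_pos (by positivity : (0:ℝ) < 1 / L)]
    ring
  have hiy : (inner ℝ (gradient f y) (z - y) : ℝ) = -((1 / L) * (inner ℝ (gradient f y) w : ℝ)) := by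
    rw [hzy, inner_neg_right, real_inner_smul_right]
  have hzx : z - x = (y - x) - (1 / L) • w := by rw [hz]; abel
  have hix : (inner ℝ (gradient f x) (z - x) : ℝ)
      = (inner ℝ (gradient f x) (y - x) : ℝ) - (1 / L) * (inner ℝ (gradient f x) w : ℝ) := by
    rw [hzx, inner_sub_right, real_inner_smul_right]
  have hww : (inner ℝ (gradient f y) w : ℝ) - (inner ℝ (gradient f x) w : ℝ) = ‖w‖ ^ 2 := by
    rw [← inner_sub_left, ← hw, real_inner_self_eq_norm_sq]
  have hμsq : 0 ≤ (μ / 2) * ‖z - x‖ ^ 2 := by positivity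
  rw [hnorm, hiy] at hd
  rw [hix] at hc
  have key : f x + (inner ℝ (gradient f x) (y - x) : ℝ) - (1 / L) * (inner ℝ (gradient f x) w : ℝ)
      ≤ f y - (1 / L) * (inner ℝ (gradient f y) w : ℝ) + L / 2 * ((1 / L) ^ 2 * ‖w‖ ^ 2) := by
    linarith
  have hL2 : L / 2 * ((1 / L) ^ 2 * ‖w‖ ^ 2) = 1 / (2 * L) * ‖w‖ ^ 2 := by
    field_simp
  rw [hL2] at key
  have hfrac : (1 / L) * (inner ℝ (gradient f y) w : ℝ) - (1 / L) * (inner ℝ (gradient f x) w : ℝ)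
      = (1 / L) * ‖w‖ ^ 2 := by rw [← mul_sub, hww]
  have h2L : (1 / L) * ‖w‖ ^ 2 - 1 / (2 * L) * ‖w‖ ^ 2 = 1 / (2 * L) * ‖w‖ ^ 2 := by
    field_simp; ring
  linarith

theorem gd_linear_convergence {n : ℕ} (f : EuclideanSpace ℝ (Fin n) → ℝ)
    (L μ : ℝ) (hμ : 0 < μ) (hμL : μ < L)
    (hf : Differentiable ℝ f)
    (hL : ∀ x y, ‖gradient f x - gradient f y‖ ≤ L * ‖x - y‖)
    (hsc : ∀ x y, f y ≥ f x + (inner ℝ (gradient f x) (y - x) : ℝ) + (μ / 2) * ‖y - x‖ ^ 2)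
    (θstar : EuclideanSpace ℝ (Fin n)) (hmin : ∀ x, f θstar ≤ f x)
    (hgradstar : gradient f θstar = 0)
    (αmax : ℝ) (hαmax : αmax ∈ Set.Ioo 0 (1 / L + μ / L ^ 2))
    (θ : ℕ → EuclideanSpace ℝ (Fin n)) (α : ℕ → ℝ)
    (hα : ∀ k, α k ∈ Set.Icc (1 / L) (min (1 / μ) αmax))
    (hrec : ∀ k, θ (k + 1) = θ k - α k • gradient f (θ k))
    (M : ℝ) (hM : M = max (1 - (μ + L) * αmax + L ^ 2 * αmax ^ 2) (1 - μ / L)) :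
    (0 < M ∧ M < 1) ∧ ∀ k, ‖θ k - θstar‖ ^ 2 ≤ M ^ k * ‖θ 0 - θstar‖ ^ 2 := by
  have hL0 : 0 < L := hμ.trans hμL
  obtain ⟨hαm0, hαm1⟩ := hαmax
  have hμL' : μ / L < 1 := (div_lt_one hL0).2 hμL
  have hμL0 : 0 < μ / L := by positivity
  have hML : 1 - μ / L ≤ M := hM ▸ le_max_right _ _
  have hMα : 1 - (μ + L) * αmax + L ^ 2 * αmax ^ 2 ≤ M := hM ▸ le_max_left _ _
  have hMpos : 0 < M := lt_of_lt_of_le (by linarith) hML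
  have hM1 : M < 1 := by
    rw [hM, max_lt_iff]
    constructor
    · have hcross : L ^ 2 * αmax < μ + L := by
        have h1 : αmax < (L + μ) / L ^ 2 := by
          have : 1 / L + μ / L ^ 2 = (L + μ) / L ^ 2 := by field_simp
          linarith [this ▸ hαm1]
        calc L ^ 2 * αmax < L ^ 2 * ((L + μ) / L ^ 2) := by
              exact mul_lt_mul_of_pos_left h1 (by positivity)
          _ = μ + L := by field_simp; ring
      nlinarith
    · linarith
  refine ⟨⟨hMpos, hM1⟩, ?_⟩
  -- per-step contraction
  have hstep : ∀ k, ‖θ (k + 1) - θstar‖ ^ 2 ≤ M * ‖θ k - θstar‖ ^ 2 := by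
    intro k
    set e := θ k - θstar with he
    set g := gradient f (θ k) with hg
    set a := α k with ha
    obtain ⟨ha1, ha2⟩ := hα k
    have haαmax : a ≤ αmax := le_trans ha2 (min_le_right _ _)
    have h1L : (0:ℝ) < 1 / L := by positivity
    have ha0 : 0 < a := lt_of_lt_of_le h1L ha1
    have haL : 1 ≤ a * L := by
      have := mul_le_mul_of_nonneg_right ha1 hL0.le
      rw [one_div, inv_mul_cancel₀ hL0.ne'] at this
      linarith
    -- strong monotonicity: μ‖e‖² ≤ ⟪g,e⟫
    have hA : μ * ‖e‖ ^ 2 ≤ (inner ℝ g e : ℝ) := by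
      have h1 := hsc (θ k) θstar
      have h2 := hsc θstar (θ k)
      rw [hgradstar] at h2
      simp only [inner_zero_left] at h2
      have hns : ‖θstar - θ k‖ = ‖e‖ := by rw [he, norm_sub_rev]
      have hni : (inner ℝ g (θstar - θ k) : ℝ) = -(inner ℝ g e : ℝ) := by
        rw [show θstar - θ k = -e from by rw [he]; abel, inner_neg_right]
      rw [hns, hni] at h1
      rw [← he] at h2
      linarith
    -- co-coercivity: ‖g‖² ≤ L ⟪g,e⟫
    have hB : ‖g‖ ^ 2 ≤ L * (inner ℝ g e : ℝ) := by
      have h1 := coco f L μ hL0 hμ hf hL hsc (θ k) θstar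
      have h2 := coco f L μ hL0 hμ hf hL hsc θstar (θ k)
      rw [hgradstar] at h1 h2
      simp only [inner_zero_left, zero_sub, norm_neg, sub_zero] at h1 h2
      have hni : (inner ℝ g (θstar - θ k) : ℝ) = -(inner ℝ g e : ℝ) := by
        rw [show θstar - θ k = -e from by rw [he]; abel, inner_neg_right]
      rw [hni] at h1
      have hsum : 2 * (1 / (2 * L) * ‖g‖ ^ 2) ≤ (inner ℝ g e : ℝ) := by linarith
      have : 1 / L * ‖g‖ ^ 2 ≤ (inner ℝ g e : ℝ) := by
        have he' : 2 * (1 / (2 * L) * ‖g‖ ^ 2) = 1 / L * ‖g‖ ^ 2 := by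
          field_simp
        linarith [he' ▸ hsum]
      calc ‖g‖ ^ 2 = L * (1 / L * ‖g‖ ^ 2) := by field_simp
        _ ≤ L * (inner ℝ g e : ℝ) := mul_le_mul_of_nonneg_left this hL0.le
    -- Lipschitz: ‖g‖² ≤ L²‖e‖²
    have hC : ‖g‖ ^ 2 ≤ L ^ 2 * ‖e‖ ^ 2 := by
      have := hL (θ k) θstar
      rw [hgradstar, sub_zero, ← he, ← hg] at this
      nlinarith [norm_nonneg g, norm_nonneg e]
    -- expand the next iterate
    have hexp : ‖θ (k + 1) - θstar‖ ^ 2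
        = ‖e‖ ^ 2 - 2 * a * (inner ℝ g e : ℝ) + a ^ 2 * ‖g‖ ^ 2 := by
      rw [hrec k, show θ k - a • g - θstar = e - a • g from by rw [he]; abel]
      rw [norm_sub_sq_real, real_inner_smul_right, norm_smul, Real.norm_eq_abs,
        abs_of_pos ha0, mul_pow, real_inner_comm]
      ring
    rw [hexp]
    -- contraction factor h(a) ≤ M
    have hfac : 1 - (μ + L) * a + L ^ 2 * a ^ 2 ≤ M := by
      have hinv : L * (1 / L) = 1 := mul_one_div_cancel hL0.ne'
      rcases le_or_gt (μ + L) (L ^ 2 * (a + αmax)) with hcase | hcase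
      · -- h(a) ≤ h(αmax) ≤ M
        have hid : 1 - (μ + L) * a + L ^ 2 * a ^ 2
            = (1 - (μ + L) * αmax + L ^ 2 * αmax ^ 2)
              + (a - αmax) * (L ^ 2 * (a + αmax) - (μ + L)) := by ring
        have hneg : (a - αmax) * (L ^ 2 * (a + αmax) - (μ + L)) ≤ 0 :=
          mul_nonpos_of_nonpos_of_nonneg (by linarith) (by linarith)
        rw [hid]
        linarith
      · -- h(a) ≤ h(1/L) = 1 - μ/L ≤ M
        have hlow : L ^ 2 * (a + 1 / L) ≤ L ^ 2 * (a + αmax) :=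
          mul_le_mul_of_nonneg_left (by linarith [le_trans ha1 haαmax]) (by positivity)
        have hid : 1 - (μ + L) * a + L ^ 2 * a ^ 2
            = (1 - (μ + L) * (1/L) + L ^ 2 * (1/L) ^ 2)
              + (a - 1/L) * (L ^ 2 * (a + 1/L) - (μ + L)) := by ring
        have hval : 1 - (μ + L) * (1/L) + L ^ 2 * (1/L) ^ 2 = 1 - μ / L := by
          field_simp; ring
        have hneg : (a - 1/L) * (L ^ 2 * (a + 1/L) - (μ + L)) ≤ 0 :=
          mul_nonpos_of_nonneg_of_nonpos (by linarith) (by linarith)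
        rw [hid, hval]
        linarith
    -- combine: multiply through by L
    have hgoal : L * (‖e‖ ^ 2 - 2 * a * (inner ℝ g e : ℝ) + a ^ 2 * ‖g‖ ^ 2)
        ≤ L * ((1 - (μ + L) * a + L ^ 2 * a ^ 2) * ‖e‖ ^ 2) := by
      nlinarith [mul_le_mul_of_nonneg_left hA (mul_nonneg ha0.le hL0.le),
        mul_le_mul_of_nonneg_left hB ha0.le,
        mul_le_mul_of_nonneg_left hC (mul_nonneg ha0.le (by linarith : (0:ℝ) ≤ a * L - 1)),
        sq_nonneg (a * L - 1), norm_nonneg e, sq_nonneg ‖e‖]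
    have h1 : ‖e‖ ^ 2 - 2 * a * (inner ℝ g e : ℝ) + a ^ 2 * ‖g‖ ^ 2
        ≤ (1 - (μ + L) * a + L ^ 2 * a ^ 2) * ‖e‖ ^ 2 :=
      le_of_mul_le_mul_left hgoal hL0
    have h2 : (1 - (μ + L) * a + L ^ 2 * a ^ 2) * ‖e‖ ^ 2 ≤ M * ‖e‖ ^ 2 :=
      mul_le_mul_of_nonneg_right hfac (sq_nonneg _)
    linarith
  intro k
  induction k with
  | zero => simp
  | succ k ih =>
    calc ‖θ (k + 1) - θstar‖ ^ 2 ≤ M * ‖θ k - θstar‖ ^ 2 := hstep k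
      _ ≤ M * (M ^ k * ‖θ 0 - θstar‖ ^ 2) := mul_le_mul_of_nonneg_left ih hMpos.le
      _ = M ^ (k + 1) * ‖θ 0 - θstar‖ ^ 2 := by ring
end
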